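/- arXiv:2312.15986 — 3 statements merged into one kernel-verified Lean document; each statement's English description precedes it below -/
import Mathlib

section
/- An S-invariant right integral form is two-sided: if λ : H → 1 satisfies (id_H ⊗ λ) ∘ Δ = η ∘ λ and λ ∘ S = λ, then also (λ ⊗ id_H) ∘ Δ = η ∘ λ. -/
open CategoryTheory MonoidalCategory

universe v u

/-- A braided Hopf algebra (Hopf monoid) in a braided monoidal category:
an object `H` with product, unit, coproduct, counit, and antipode satisfying
the standard braided Hopf algebra axioms. -/
structure BraidedHopfAlgebra (C : Type u) [Category.{v} C] [MonoidalCategory C]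
    [BraidedCategory C] where
  H : C
  mul : H ⊗ H ⟶ H
  unit : 𝟙_ C ⟶ H
  comul : H ⟶ H ⊗ H
  counit : H ⟶ 𝟙_ C
  antipode : H ⟶ H
  mul_assoc : (mul ⊗ₘ 𝟙 H) ≫ mul = (α_ H H H).hom ≫ (𝟙 H ⊗ₘ mul) ≫ mul
  unit_left : (unit ⊗ₘ 𝟙 H) ≫ mul = (λ_ H).hom
  unit_right : (𝟙 H ⊗ₘ unit) ≫ mul = (ρ_ H).hom
  comul_coassoc : comul ≫ (comul ⊗ₘ 𝟙 H) = comul ≫ (𝟙 H ⊗ₘ comul) ≫ (α_ H H H).inv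
  counit_left : comul ≫ (counit ⊗ₘ 𝟙 H) = (λ_ H).inv
  counit_right : comul ≫ (𝟙 H ⊗ₘ counit) = (ρ_ H).inv
  mul_comul : mul ≫ comul =
    (comul ⊗ₘ comul) ≫ (α_ H H (H ⊗ H)).hom ≫ (𝟙 H ⊗ₘ (α_ H H H).inv) ≫
      (𝟙 H ⊗ₘ ((β_ H H).hom ⊗ₘ 𝟙 H)) ≫ (𝟙 H ⊗ₘ (α_ H H H).hom) ≫
      (α_ H H (H ⊗ H)).inv ≫ (mul ⊗ₘ mul)
  counit_mul : mul ≫ counit = (counit ⊗ₘ counit) ≫ (λ_ (𝟙_ C)).hom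
  comul_unit : unit ≫ comul = (λ_ (𝟙_ C)).inv ≫ (unit ⊗ₘ unit)
  counit_unit : unit ≫ counit = 𝟙 (𝟙_ C)
  antipode_left : comul ≫ (antipode ⊗ₘ 𝟙 H) ≫ mul = counit ≫ unit
  antipode_right : comul ≫ (𝟙 H ⊗ₘ antipode) ≫ mul = counit ≫ unit

variable {C : Type u} [Category.{v} C] [MonoidalCategory C] [BraidedCategory C]

/-!
The antipode reverses the coproduct, `Δ ∘ S = (S ⊗ S) ∘ c ∘ Δ`. Hence
`S ∘ (λ ⊗ id) ∘ Δ = (λ ⊗ S) ∘ Δ = (λS ⊗ S) ∘ Δ`, and by naturality of the braiding the latter is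
`S ∘ (id ⊗ λ) ∘ Δ = S ∘ η ∘ λ = η ∘ λ = S ∘ η ∘ λ`. Cancel the invertible `S`.
-/

namespace BraidedHopfAlgebra

variable (A : BraidedHopfAlgebra C)

noncomputable abbrev toMonObj : MonObj A.H where
  one := A.unit
  mul := A.mul
  one_mul := by simpa using A.unit_left
  mul_one := by simpa using A.unit_right
  mul_assoc := by simpa using A.mul_assoc

noncomputable abbrev toBimonObj : BimonObj A.H :=
  letI := A.toMonObj
  { counit := A.counit
    comul := A.comul
    counit_comul := by simpa using A.counit_left
    comul_counit := by simpa using A.counit_right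
    comul_assoc := by
      simpa [← cancel_mono (α_ A.H A.H A.H).inv] using A.comul_coassoc.symm
    mul_comul := by
      change A.mul ≫ A.comul = (A.comul ⊗ₘ A.comul) ≫ tensorμ _ _ _ _ ≫ (A.mul ⊗ₘ A.mul)
      simpa [tensorμ] using A.mul_comul
    one_comul := A.comul_unit
    mul_counit := A.counit_mul
    one_counit := A.counit_unit }

noncomputable abbrev toHopfObj : HopfObj A.H :=
  letI := A.toBimonObj
  { antipode := A.antipode
    antipode_left := by rw [← tensorHom_id]; exact A.antipode_left
    antipode_right := by rw [← id_tensorHom]; exact A.antipode_right }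

theorem antipode_comul :
    A.antipode ≫ A.comul = A.comul ≫ (β_ A.H A.H).hom ≫ (A.antipode ⊗ₘ A.antipode) :=
  letI := A.toHopfObj
  HopfObj.antipode_comul A.H

theorem unit_antipode : A.unit ≫ A.antipode = A.unit :=
  letI := A.toHopfObj
  HopfObj.one_antipode A.H

theorem antipode_comul_id_tensorHom (l : A.H ⟶ 𝟙_ C) :
    A.antipode ≫ A.comul ≫ (𝟙 A.H ⊗ₘ l) ≫ (ρ_ A.H).hom =
      A.comul ≫ ((A.antipode ≫ l) ⊗ₘ A.antipode) ≫ (λ_ A.H).hom := by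
  rw [reassoc_of% A.antipode_comul, tensorHom_comp_tensorHom_assoc, Category.comp_id,
    ← braiding_rightUnitor, BraidedCategory.braiding_naturality_assoc]

end BraidedHopfAlgebra

/-- An `S`-invariant right integral form is two-sided. -/
theorem integral_form_two_sided (A : BraidedHopfAlgebra C) [IsIso A.antipode]
    (l : A.H ⟶ 𝟙_ C)
    (hr : A.comul ≫ (𝟙 A.H ⊗ₘ l) ≫ (ρ_ A.H).hom = l ≫ A.unit)
    (hS : A.antipode ≫ l = l) :
    A.comul ≫ (l ⊗ₘ 𝟙 A.H) ≫ (λ_ A.H).hom = l ≫ A.unit := by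
  rw [← cancel_mono A.antipode]
  calc (A.comul ≫ (l ⊗ₘ 𝟙 A.H) ≫ (λ_ A.H).hom) ≫ A.antipode
      = A.comul ≫ ((A.antipode ≫ l) ⊗ₘ A.antipode) ≫ (λ_ A.H).hom := by
        rw [hS, Category.assoc, Category.assoc, ← leftUnitor_naturality, ← id_tensorHom,
          tensorHom_comp_tensorHom_assoc, Category.comp_id, Category.id_comp]
    _ = A.antipode ≫ l ≫ A.unit := by rw [← A.antipode_comul_id_tensorHom, hr]
    _ = (l ≫ A.unit) ≫ A.antipode := by rw [reassoc_of% hS, Category.assoc, A.unit_antipode]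
end

section
/- The integral element Λ is a two-sided unit for the Frobenius product μ̃ := (id_H ⊗ ev) ∘ (Δ ⊗ id_H), where ev := λ ∘ μ ∘ (id ⊗ S): namely μ̃ ∘ (Λ ⊗ id_H) = id_H = μ̃ ∘ (id_H ⊗ Λ). -/
open CategoryTheory MonoidalCategory

universe v u

variable {C : Type u} [Category.{v} C] [MonoidalCategory C] [BraidedCategory C]

open scoped MonObj ComonObj HopfObj

/-! Write `μ̃(a ⊗ x) = a₁ λ(a₂ S(x))` (Sweedler notation, braidings suppressed).

Left unit: in the algebra `H ⊗ H`, where `Δ` is multiplicative, `a₁x₁ ⊗ a₂x₂S(x₃)` equals both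
`Δ(a x₁) · (1 ⊗ S x₂)` and `Δ(a) · (x ⊗ 1)`. For `a = Λ` the first reads `Λ₁ ⊗ Λ₂ S(x)`, because
`Λ x₁ = ε(x₁) Λ`; hence `μ̃(Λ ⊗ x) = Λ₁ λ(Λ₂) x = x` by the integral property of `λ` and `λ(Λ) = 1`.

Right unit: `λ(xΛ) = λ(S(xΛ)) = λ(S(Λ) S(x)) = λ(Λ S(x)) = ε(x)`, so `μ̃(x ⊗ Λ) = x₁ ε(x₂) = x`. -/

namespace BraidedHopfAlgebra

instance (A : BraidedHopfAlgebra C) : HopfObj A.H where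
  one := A.unit
  mul := A.mul
  one_mul := by simpa only [tensorHom_id] using A.unit_left
  mul_one := by simpa only [id_tensorHom] using A.unit_right
  mul_assoc := by simpa only [tensorHom_id, id_tensorHom] using A.mul_assoc
  counit := A.counit
  comul := A.comul
  counit_comul := by simpa only [tensorHom_id] using A.counit_left
  comul_counit := by simpa only [id_tensorHom] using A.counit_right
  comul_assoc := by
    simpa only [tensorHom_id, id_tensorHom, Category.assoc, Iso.inv_hom_id, Category.comp_id]
      using (A.comul_coassoc =≫ (α_ A.H A.H A.H).hom).symm
  mul_comul := by
    simp only [A.mul_comul, tensorμ, tensorHom_id, id_tensorHom, Category.assoc]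
  one_comul := A.comul_unit
  mul_counit := A.counit_mul
  one_counit := A.counit_unit
  antipode := A.antipode
  antipode_left := by simpa only [tensorHom_id] using A.antipode_left
  antipode_right := by simpa only [id_tensorHom] using A.antipode_right

end BraidedHopfAlgebra

namespace CategoryTheory.MonObj

variable {M N : C} [MonObj M] [MonObj N]

lemma whiskerLeft_one_tensor_comp_mul :
    (M ⊗ N) ◁ ((λ_ N).inv ≫ η ▷ N) ≫ μ[M ⊗ N] = (α_ M N N).hom ≫ M ◁ μ := by
  have coherence : (M ⊗ N) ◁ (λ_ N).inv ≫ tensorμ M N (𝟙_ C) N ≫ (ρ_ M).hom ▷ (N ⊗ N) =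
      (α_ M N N).hom := by
    simp only [tensorμ, braiding_tensorUnit_right]
    monoidal
  calc (M ⊗ N) ◁ ((λ_ N).inv ≫ η ▷ N) ≫ μ[M ⊗ N]
      = (M ⊗ N) ◁ (λ_ N).inv ≫ ((M ⊗ N) ◁ (η ⊗ₘ 𝟙 N) ≫ tensorμ M N M N) ≫ (μ ⊗ₘ μ) := by
        simp only [tensorObj.mul_def, tensorHom_id, MonoidalCategory.whiskerLeft_comp,
          Category.assoc]
    _ = (M ⊗ N) ◁ (λ_ N).inv ≫ tensorμ M N (𝟙_ C) N ≫ ((ρ_ M).hom ⊗ₘ μ) := by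
        rw [tensorμ_natural_right]
        simp only [Category.assoc, tensorHom_comp_tensorHom, MonoidalCategory.whiskerLeft_id,
          Category.id_comp, mul_one]
    _ = ((M ⊗ N) ◁ (λ_ N).inv ≫ tensorμ M N (𝟙_ C) N ≫ (ρ_ M).hom ▷ (N ⊗ N)) ≫ M ◁ μ := by
        rw [MonoidalCategory.tensorHom_def]; simp only [Category.assoc]
    _ = (α_ M N N).hom ≫ M ◁ μ := by rw [coherence]

lemma whiskerLeft_tensor_one_comp_mul :
    (M ⊗ N) ◁ ((ρ_ M).inv ≫ M ◁ η) ≫ μ[M ⊗ N] =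
      (α_ M N M).hom ≫ M ◁ (β_ N M).hom ≫ (α_ M M N).inv ≫ μ ▷ N := by
  have coherence : (M ⊗ N) ◁ (ρ_ M).inv ≫ tensorμ M N M (𝟙_ C) ≫ (M ⊗ M) ◁ (ρ_ N).hom =
      (α_ M N M).hom ≫ M ◁ (β_ N M).hom ≫ (α_ M M N).inv := by
    simp only [tensorμ, MonoidalCategory.whiskerRight_id]
    monoidal
  calc (M ⊗ N) ◁ ((ρ_ M).inv ≫ M ◁ η) ≫ μ[M ⊗ N]
      = (M ⊗ N) ◁ (ρ_ M).inv ≫ ((M ⊗ N) ◁ (𝟙 M ⊗ₘ η) ≫ tensorμ M N M N) ≫ (μ ⊗ₘ μ) := by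
        simp only [tensorObj.mul_def, id_tensorHom, MonoidalCategory.whiskerLeft_comp,
          Category.assoc]
    _ = (M ⊗ N) ◁ (ρ_ M).inv ≫ tensorμ M N M (𝟙_ C) ≫ (μ ⊗ₘ (ρ_ N).hom) := by
        rw [tensorμ_natural_right]
        simp only [Category.assoc, tensorHom_comp_tensorHom, MonoidalCategory.whiskerLeft_id,
          Category.id_comp, mul_one]
    _ = ((M ⊗ N) ◁ (ρ_ M).inv ≫ tensorμ M N M (𝟙_ C) ≫ (M ⊗ M) ◁ (ρ_ N).hom) ≫ μ ▷ N := by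
        rw [MonoidalCategory.tensorHom_def']; simp only [Category.assoc]
    _ = _ := by rw [coherence]; simp only [Category.assoc]

end CategoryTheory.MonObj

namespace CategoryTheory.HopfObj

variable {H : C} [HopfObj H]

lemma comul_comp_mul_one_tensor_antipode :
    Δ ≫ Δ ▷ H ≫ (H ⊗ H) ◁ (𝒮 ≫ (λ_ H).inv ≫ η ▷ H) ≫ μ[H ⊗ H] = (ρ_ H).inv ≫ H ◁ η := by
  calc Δ ≫ Δ ▷ H ≫ (H ⊗ H) ◁ (𝒮 ≫ (λ_ H).inv ≫ η ▷ H) ≫ μ[H ⊗ H]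
      = (Δ ≫ Δ ▷ H ≫ (α_ H H H).hom) ≫ H ◁ (H ◁ 𝒮 ≫ μ) := by
        rw [MonoidalCategory.whiskerLeft_comp_assoc, MonObj.whiskerLeft_one_tensor_comp_mul,
          associator_naturality_right_assoc]
        simp only [MonoidalCategory.whiskerLeft_comp, Category.assoc]
    _ = Δ ≫ H ◁ (Δ ≫ H ◁ 𝒮 ≫ μ) := by
        rw [← ComonObj.comul_assoc]; simp only [MonoidalCategory.whiskerLeft_comp, Category.assoc]
    _ = (ρ_ H).inv ≫ H ◁ η := by
        rw [antipode_right, MonoidalCategory.whiskerLeft_comp, ComonObj.comul_counit_assoc]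

/-- `(a x₁)₁ ⊗ (a x₁)₂ S(x₂) = a₁ x ⊗ a₂`, the braiding carrying `x` past `a₂`. -/
lemma mul_comul_antipode_mul :
    H ◁ Δ ≫ (α_ H H H).inv ≫ μ ▷ H ≫ Δ ▷ H ≫ (α_ H H H).hom ≫ H ◁ (H ◁ 𝒮 ≫ μ) =
      Δ ▷ H ≫ (α_ H H H).hom ≫ H ◁ (β_ H H).hom ≫ (α_ H H H).inv ≫ μ ▷ H := by
  set w : H ⟶ H ⊗ H := 𝒮 ≫ (λ_ H).inv ≫ η ▷ H
  have hw : (H ⊗ H) ◁ w ≫ μ[H ⊗ H] = (α_ H H H).hom ≫ H ◁ (H ◁ 𝒮 ≫ μ) := by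
    rw [MonoidalCategory.whiskerLeft_comp_assoc, MonObj.whiskerLeft_one_tensor_comp_mul,
      associator_naturality_right_assoc, MonoidalCategory.whiskerLeft_comp]
  calc H ◁ Δ ≫ (α_ H H H).inv ≫ μ ▷ H ≫ Δ ▷ H ≫ (α_ H H H).hom ≫ H ◁ (H ◁ 𝒮 ≫ μ)
      = H ◁ Δ ≫ (α_ H H H).inv ≫ ((Δ ⊗ₘ Δ) ≫ μ[H ⊗ H]) ▷ H ≫ (H ⊗ H) ◁ w ≫ μ[H ⊗ H] := by
        rw [hw, MonObj.tensorObj.mul_def, ← BimonObj.mul_comul]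
        simp only [comp_whiskerRight, Category.assoc]
    _ = H ◁ Δ ≫ (α_ H H H).inv ≫ (Δ ⊗ₘ Δ) ▷ H ≫ ((H ⊗ H) ⊗ (H ⊗ H)) ◁ w ≫
          (α_ (H ⊗ H) (H ⊗ H) (H ⊗ H)).hom ≫ (H ⊗ H) ◁ μ[H ⊗ H] ≫ μ[H ⊗ H] := by
        rw [← MonObj.mul_assoc, comp_whiskerRight_assoc, whisker_exchange_assoc]
    _ = Δ ▷ H ≫ (H ⊗ H) ◁ (Δ ≫ Δ ▷ H ≫ (H ⊗ H) ◁ w ≫ μ[H ⊗ H]) ≫ μ[H ⊗ H] := by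
        rw [MonoidalCategory.tensorHom_def, comp_whiskerRight_assoc,
          ← associator_inv_naturality_left_assoc, whisker_exchange_assoc]
        monoidal
    _ = Δ ▷ H ≫ (α_ H H H).hom ≫ H ◁ (β_ H H).hom ≫ (α_ H H H).inv ≫ μ ▷ H := by
        rw [comul_comp_mul_one_tensor_antipode, MonObj.whiskerLeft_tensor_one_comp_mul]

lemma integral_whiskerRight_comul_mul {Λ : 𝟙_ C ⟶ H} (hΛ : Λ ▷ H ≫ μ = (λ_ H).hom ≫ ε ≫ Λ) :
    Λ ▷ H ≫ H ◁ Δ ≫ (α_ H H H).inv ≫ μ ▷ H = Λ ▷ H := by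
  rw [← whisker_exchange_assoc, associator_inv_naturality_left_assoc, ← comp_whiskerRight, hΛ]
  simp

lemma integral_comul_antipode_mul {Λ : 𝟙_ C ⟶ H} (hΛ : Λ ▷ H ≫ μ = (λ_ H).hom ≫ ε ≫ Λ) :
    Λ ▷ H ≫ Δ ▷ H ≫ (α_ H H H).hom ≫ H ◁ (H ◁ 𝒮 ≫ μ) =
      Λ ▷ H ≫ Δ ▷ H ≫ (α_ H H H).hom ≫ H ◁ (β_ H H).hom ≫ (α_ H H H).inv ≫ μ ▷ H := by
  rw [← mul_comul_antipode_mul, ← reassoc_of% integral_whiskerRight_comul_mul hΛ]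

lemma integralForm_mul_integral {Λ : 𝟙_ C ⟶ H} {l : H ⟶ 𝟙_ C}
    (hΛ : Λ ▷ H ≫ μ = (λ_ H).hom ≫ ε ≫ Λ) (hlΛ : Λ ≫ l = 𝟙 (𝟙_ C)) (hSΛ : Λ ≫ 𝒮 = Λ)
    (hlS : 𝒮 ≫ l = l) :
    (ρ_ H).inv ≫ H ◁ Λ ≫ μ ≫ l = ε := by
  calc (ρ_ H).inv ≫ H ◁ Λ ≫ μ ≫ l
      = (ρ_ H).inv ≫ H ◁ Λ ≫ (𝒮 ⊗ₘ 𝒮) ≫ (β_ H H).hom ≫ μ ≫ l := by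
        conv_lhs => rw [← hlS, reassoc_of% mul_antipode H]
    _ = 𝒮 ≫ (ρ_ H).inv ≫ H ◁ (Λ ≫ 𝒮) ≫ (β_ H H).hom ≫ μ ≫ l := by
        rw [MonoidalCategory.tensorHom_def, Category.assoc, whisker_exchange_assoc,
          ← rightUnitor_inv_naturality_assoc, MonoidalCategory.whiskerLeft_comp_assoc]
    _ = 𝒮 ≫ (λ_ H).inv ≫ (Λ ▷ H ≫ μ) ≫ l := by
        rw [hSΛ, BraidedCategory.braiding_naturality_right_assoc, braiding_tensorUnit_right]
        simp only [Category.assoc, Iso.inv_hom_id_assoc]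
    _ = ε := by
        rw [hΛ]; simp [hlΛ, antipode_counit]

def frobeniusMul (l : H ⟶ 𝟙_ C) : H ⊗ H ⟶ H :=
  Δ ▷ H ≫ (α_ H H H).hom ≫ H ◁ (H ◁ 𝒮 ≫ μ ≫ l) ≫ (ρ_ H).hom

lemma integral_frobeniusMul {Λ : 𝟙_ C ⟶ H} {l : H ⟶ 𝟙_ C}
    (hl : Δ ≫ H ◁ l ≫ (ρ_ H).hom = l ≫ η) (hΛ : Λ ▷ H ≫ μ = (λ_ H).hom ≫ ε ≫ Λ)
    (hlΛ : Λ ≫ l = 𝟙 (𝟙_ C)) :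
    Λ ▷ H ≫ frobeniusMul l = (λ_ H).hom := by
  have braiding_discard : (β_ H H).hom ≫ H ◁ l ≫ (ρ_ H).hom = l ▷ H ≫ (λ_ H).hom := by
    rw [← BraidedCategory.braiding_naturality_left_assoc, braiding_rightUnitor]
  have discard_middle : (α_ H H H).hom ≫ H ◁ (β_ H H).hom ≫ (α_ H H H).inv ≫ μ ▷ H ≫
      H ◁ l ≫ (ρ_ H).hom = (H ◁ l ≫ (ρ_ H).hom) ▷ H ≫ μ := by
    calc (α_ H H H).hom ≫ H ◁ (β_ H H).hom ≫ (α_ H H H).inv ≫ μ ▷ H ≫ H ◁ l ≫ (ρ_ H).hom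
        = (α_ H H H).hom ≫ H ◁ (β_ H H).hom ≫ (α_ H H H).inv ≫ (H ⊗ H) ◁ l ≫
            (ρ_ (H ⊗ H)).hom ≫ μ := by
          rw [← whisker_exchange_assoc, rightUnitor_naturality]
      _ = (α_ H H H).hom ≫ H ◁ ((β_ H H).hom ≫ H ◁ l ≫ (ρ_ H).hom) ≫ μ := by monoidal
      _ = (H ◁ l ≫ (ρ_ H).hom) ▷ H ≫ μ := by rw [braiding_discard]; monoidal
  calc Λ ▷ H ≫ frobeniusMul l
      = Λ ▷ H ≫ Δ ▷ H ≫ (α_ H H H).hom ≫ H ◁ (H ◁ 𝒮 ≫ μ) ≫ H ◁ l ≫ (ρ_ H).hom := by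
        simp only [frobeniusMul, MonoidalCategory.whiskerLeft_comp, Category.assoc]
    _ = (Λ ≫ Δ ≫ H ◁ l ≫ (ρ_ H).hom) ▷ H ≫ μ := by
        rw [reassoc_of% integral_comul_antipode_mul hΛ]
        simp only [Category.assoc, discard_middle, comp_whiskerRight]
    _ = (λ_ H).hom := by rw [hl, reassoc_of% hlΛ, MonObj.one_mul]

lemma frobeniusMul_integral {Λ : 𝟙_ C ⟶ H} {l : H ⟶ 𝟙_ C}
    (hΛ : Λ ▷ H ≫ μ = (λ_ H).hom ≫ ε ≫ Λ) (hlΛ : Λ ≫ l = 𝟙 (𝟙_ C)) (hSΛ : Λ ≫ 𝒮 = Λ)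
    (hlS : 𝒮 ≫ l = l) :
    H ◁ Λ ≫ frobeniusMul l = (ρ_ H).hom := by
  calc H ◁ Λ ≫ frobeniusMul l
      = (ρ_ H).hom ≫ Δ ≫ (ρ_ (H ⊗ H)).inv ≫ (H ⊗ H) ◁ Λ ≫ (α_ H H H).hom ≫
          H ◁ (H ◁ 𝒮 ≫ μ ≫ l) ≫ (ρ_ H).hom := by
        rw [frobeniusMul, whisker_exchange_assoc, MonoidalCategory.whiskerRight_id]
        simp only [Category.assoc]
    _ = (ρ_ H).hom ≫ Δ ≫ H ◁ ((ρ_ H).inv ≫ H ◁ (Λ ≫ 𝒮) ≫ μ ≫ l) ≫ (ρ_ H).hom := by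
        monoidal
    _ = (ρ_ H).hom := by
        rw [hSΛ, integralForm_mul_integral hΛ hlΛ hSΛ hlS, ComonObj.comul_counit_assoc,
          Iso.inv_hom_id, Category.comp_id]

end CategoryTheory.HopfObj

theorem integral_frobenius_unit_general (A : BraidedHopfAlgebra C)
    (l : A.H ⟶ 𝟙_ C) (L : 𝟙_ C ⟶ A.H)
    (hl : A.comul ≫ (𝟙 A.H ⊗ₘ l) ≫ (ρ_ A.H).hom = l ≫ A.unit)
    (hL : (L ⊗ₘ 𝟙 A.H) ≫ A.mul = (λ_ A.H).hom ≫ A.counit ≫ L)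
    (hlL : L ≫ l = 𝟙 (𝟙_ C))
    (hSL : L ≫ A.antipode = L)
    (hlS : A.antipode ≫ l = l) :
    (λ_ A.H).inv ≫ (L ⊗ₘ 𝟙 A.H) ≫
        ((A.comul ⊗ₘ 𝟙 A.H) ≫ (α_ A.H A.H A.H).hom ≫
      (𝟙 A.H ⊗ₘ ((𝟙 A.H ⊗ₘ A.antipode) ≫ A.mul ≫ l)) ≫ (ρ_ A.H).hom) = 𝟙 A.H ∧
      (ρ_ A.H).inv ≫ (𝟙 A.H ⊗ₘ L) ≫
        ((A.comul ⊗ₘ 𝟙 A.H) ≫ (α_ A.H A.H A.H).hom ≫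
      (𝟙 A.H ⊗ₘ ((𝟙 A.H ⊗ₘ A.antipode) ≫ A.mul ≫ l)) ≫ (ρ_ A.H).hom) = 𝟙 A.H := by
  simp only [tensorHom_id, id_tensorHom] at hl hL ⊢
  exact ⟨((λ_ A.H).inv ≫= HopfObj.integral_frobeniusMul hl hL hlL).trans (Iso.inv_hom_id _),
    ((ρ_ A.H).inv ≫= HopfObj.frobeniusMul_integral hL hlL hSL hlS).trans (Iso.inv_hom_id _)⟩

/-- The integral element `Λ` is a two-sided unit for the Frobenius product
`μ̃ := (id ⊗ ev) ∘ (Δ ⊗ id)`, where `ev := λ ∘ μ ∘ (id ⊗ S)`. -/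
theorem integral_frobenius_unit (A : BraidedHopfAlgebra C) [IsIso A.antipode]
    (l : A.H ⟶ 𝟙_ C) (L : 𝟙_ C ⟶ A.H)
    (hl : A.comul ≫ (𝟙 A.H ⊗ₘ l) ≫ (ρ_ A.H).hom = l ≫ A.unit)
    (hL : (L ⊗ₘ 𝟙 A.H) ≫ A.mul = (λ_ A.H).hom ≫ A.counit ≫ L)
    (hlL : L ≫ l = 𝟙 (𝟙_ C))
    (hSL : L ≫ A.antipode = L)
    (hlS : A.antipode ≫ l = l) :
    (λ_ A.H).inv ≫ (L ⊗ₘ 𝟙 A.H) ≫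
        ((A.comul ⊗ₘ 𝟙 A.H) ≫ (α_ A.H A.H A.H).hom ≫
      (𝟙 A.H ⊗ₘ ((𝟙 A.H ⊗ₘ A.antipode) ≫ A.mul ≫ l)) ≫ (ρ_ A.H).hom) = 𝟙 A.H ∧
      (ρ_ A.H).inv ≫ (𝟙 A.H ⊗ₘ L) ≫
        ((A.comul ⊗ₘ 𝟙 A.H) ≫ (α_ A.H A.H A.H).hom ≫
      (𝟙 A.H ⊗ₘ ((𝟙 A.H ⊗ₘ A.antipode) ≫ A.mul ≫ l)) ≫ (ρ_ A.H).hom) = 𝟙 A.H :=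
  integral_frobenius_unit_general A l L hl hL hlL hSL hlS
end

section
/- If the left adjoint action ad of a braided Hopf algebra H is braided cocommutative, i.e. (ad ⊗ id) ∘ (id ⊗ c_{H,H}) ∘ (Δ ⊗ id) = c_{H,H}^{-1} ∘ (id ⊗ ad) ∘ (Δ ⊗ id), then ad intertwines the antipode: S ∘ ad = ad ∘ (id_H ⊗ S). -/
open CategoryTheory MonoidalCategory

universe v u

variable {C : Type u} [Category.{v} C] [MonoidalCategory C] [BraidedCategory C]

/-- The left adjoint action `ad = μ ∘ (μ ⊗ S) ∘ (id ⊗ c) ∘ (Δ ⊗ id)` of a braided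
Hopf algebra on itself. -/
def adAction (A : BraidedHopfAlgebra C) : A.H ⊗ A.H ⟶ A.H :=
  (A.comul ⊗ₘ 𝟙 A.H) ≫ (α_ A.H A.H A.H).hom ≫ (𝟙 A.H ⊗ₘ (β_ A.H A.H).hom) ≫
    (α_ A.H A.H A.H).inv ≫ (A.mul ⊗ₘ A.antipode) ≫ A.mul

/-!
Let `f ⋆ g = convSMul f g` be the convolution action `(h, x) ↦ f(h₁) g(h₂, x)` of `f : H ⟶ H`
on `g : H ⊗ X ⟶ H`, and `g ⋆ f = convSMulRight g f` the right action
`(h, x) ↦ g(h₁, x') f(h₂')`, where `x'`, `h₂'` are the legs after braiding `x` past `h₂`; by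
coassociativity the two actions commute. Since `ad = id ⋆ ψ` with `ψ(h, x) = x' S(h')`, and
`(ψ ⋆ id)(h, x) = ε(h) x` by the antipode axiom, one gets `ad ⋆ id = μ`. As `S` is an
anti-homomorphism, `(S ⋆ (S ∘ ad))(h, x) = S(μ(c⁻¹(h₁ ⊗ ad(h₂, x))))`, which braided
cocommutativity turns into `S((ad ⋆ id)(h, x)) = S(h x)`. Acting with `id` and using
`id * S = η ε` in the convolution monoid yields `S ∘ ad = id ⋆ (S ∘ μ) = ad ∘ (id ⊗ S)`.
-/

open scoped MonObj ComonObj HopfObj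

namespace CategoryTheory

section Monoidal

variable {D : Type*} [Category D] [MonoidalCategory D] {M N : D} [ComonObj M] [MonObj N] {X : D}

theorem ComonObj.comul_whiskerRight_coassoc :
    Δ[M] ▷ X ≫ (α_ M M X).hom ≫ M ◁ (Δ[M] ▷ X ≫ (α_ M M X).hom) =
      Δ[M] ▷ X ≫ (α_ M M X).hom ≫ Δ[M] ▷ (M ⊗ X) ≫ (α_ M M (M ⊗ X)).hom := by
  rw [← associator_naturality_left_assoc, ← comp_whiskerRight_assoc, ComonObj.comul_assoc_flip,
    MonoidalCategory.whiskerLeft_comp, ← associator_naturality_middle_assoc]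
  simp only [comp_whiskerRight, Category.assoc]
  monoidal

def convSMul (f : M ⟶ N) (g : M ⊗ X ⟶ N) : M ⊗ X ⟶ N :=
  Δ[M] ▷ X ≫ (α_ M M X).hom ≫ (f ⊗ₘ g) ≫ μ[N]

theorem counit_unit_convSMul (g : M ⊗ X ⟶ N) : convSMul (ε[M] ≫ η[N]) g = g := by
  simp only [convSMul, MonoidalCategory.tensorHom_def, comp_whiskerRight, Category.assoc,
    ← whisker_exchange_assoc, MonObj.one_mul, leftUnitor_naturality]
  rw [← associator_naturality_left_assoc]
  simp [← comp_whiskerRight_assoc]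

theorem convSMul_convSMul (f f' : M ⟶ N) (g : M ⊗ X ⟶ N) :
    convSMul f (convSMul f' g) = convSMul (Δ[M] ≫ (f ⊗ₘ f') ≫ μ[N]) g := by
  have lhs : convSMul f (convSMul f' g) = Δ[M] ▷ X ≫ (α_ M M X).hom ≫
      M ◁ (Δ[M] ▷ X ≫ (α_ M M X).hom) ≫ (f ⊗ₘ f' ⊗ₘ g) ≫ N ◁ μ[N] ≫ μ[N] := by
    rw [whiskerLeft_comp_tensorHom_assoc, tensorHom_comp_whiskerLeft_assoc]
    simp only [convSMul, Category.assoc]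
  have rhs : convSMul (Δ[M] ≫ (f ⊗ₘ f') ≫ μ[N]) g = Δ[M] ▷ X ≫ (α_ M M X).hom ≫
      Δ[M] ▷ (M ⊗ X) ≫ (α_ M M (M ⊗ X)).hom ≫ (f ⊗ₘ f' ⊗ₘ g) ≫ N ◁ μ[N] ≫ μ[N] := by
    rw [← associator_naturality_assoc, ← MonObj.mul_assoc, tensorHom_comp_whiskerRight_assoc,
      whiskerRight_comp_tensorHom_assoc]
    simp only [convSMul]
  rw [lhs, rhs, reassoc_of% ComonObj.comul_whiskerRight_coassoc]

theorem convSMul_counit_whiskerRight (f : M ⟶ N) (g : X ⟶ N) :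
    convSMul f (ε[M] ▷ X ≫ (λ_ X).hom ≫ g) = (f ⊗ₘ g) ≫ μ[N] := by
  rw [convSMul, ← whiskerLeft_comp_tensorHom, ← whiskerLeft_comp_tensorHom, Category.assoc,
    ← associator_naturality_middle_assoc, Category.assoc, triangle_assoc,
    ← comp_whiskerRight_assoc, ← comp_whiskerRight_assoc, ComonObj.comul_counit]
  simp

theorem whiskerLeft_comp_convSMul {Y : D} (k : Y ⟶ X) (f : M ⟶ N) (g : M ⊗ X ⟶ N) :
    M ◁ k ≫ convSMul f g = convSMul f (M ◁ k ≫ g) := by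
  rw [convSMul, convSMul, whisker_exchange_assoc, associator_naturality_right_assoc,
    whiskerLeft_comp_tensorHom_assoc]

end Monoidal

section Braided

variable {M N : C} [ComonObj M] [MonObj N] {X : C}

theorem ComonObj.comul_whiskerRight_braiding_comm :
    Δ[M] ▷ X ≫ (α_ M M X).hom ≫ M ◁ (Δ[M] ▷ X ≫ (α_ M M X).hom ≫ M ◁ (β_ M X).hom ≫
      (α_ M X M).inv) =
    Δ[M] ▷ X ≫ (α_ M M X).hom ≫ M ◁ (β_ M X).hom ≫ (α_ M X M).inv ≫
      (Δ[M] ▷ X ≫ (α_ M M X).hom) ▷ M ≫ (α_ M (M ⊗ X) M).hom := by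
  rw [MonoidalCategory.whiskerLeft_comp, ← associator_naturality_middle_assoc,
    ← comp_whiskerRight_assoc, ComonObj.comul_assoc]
  simp only [comp_whiskerRight, MonoidalCategory.whiskerLeft_comp, Category.assoc]
  rw [← associator_inv_naturality_left_assoc, whisker_exchange_assoc,
    ← associator_naturality_left_assoc]
  monoidal

def convSMulRight (g : M ⊗ X ⟶ N) (f : M ⟶ N) : M ⊗ X ⟶ N :=
  Δ[M] ▷ X ≫ (α_ M M X).hom ≫ M ◁ (β_ M X).hom ≫ (α_ M X M).inv ≫ (g ⊗ₘ f) ≫ μ[N]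

theorem convSMul_convSMulRight (f f' : M ⟶ N) (g : M ⊗ X ⟶ N) :
    convSMul f (convSMulRight g f') = convSMulRight (convSMul f g) f' := by
  have lhs : convSMul f (convSMulRight g f') = Δ[M] ▷ X ≫ (α_ M M X).hom ≫
      M ◁ (Δ[M] ▷ X ≫ (α_ M M X).hom ≫ M ◁ (β_ M X).hom ≫ (α_ M X M).inv) ≫
      (f ⊗ₘ g ⊗ₘ f') ≫ N ◁ μ[N] ≫ μ[N] := by
    rw [whiskerLeft_comp_tensorHom_assoc, tensorHom_comp_whiskerLeft_assoc]
    simp only [convSMul, convSMulRight, Category.assoc]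
  have rhs : convSMulRight (convSMul f g) f' = Δ[M] ▷ X ≫ (α_ M M X).hom ≫
      M ◁ (β_ M X).hom ≫ (α_ M X M).inv ≫ (Δ[M] ▷ X ≫ (α_ M M X).hom) ▷ M ≫
      (α_ M (M ⊗ X) M).hom ≫ (f ⊗ₘ g ⊗ₘ f') ≫ N ◁ μ[N] ≫ μ[N] := by
    rw [← associator_naturality_assoc, ← MonObj.mul_assoc, tensorHom_comp_whiskerRight_assoc,
      whiskerRight_comp_tensorHom_assoc]
    simp only [convSMul, convSMulRight, Category.assoc]
  rw [lhs, rhs, reassoc_of% ComonObj.comul_whiskerRight_braiding_comm]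

end Braided

namespace HopfObj

variable (H : C) [HopfObj H]

def adjointAction : H ⊗ H ⟶ H :=
  Δ[H] ▷ H ≫ (α_ H H H).hom ≫ H ◁ (β_ H H).hom ≫ (α_ H H H).inv ≫ (μ[H] ⊗ₘ 𝒮[H]) ≫ μ[H]

theorem adjointAction_eq_convSMul :
    adjointAction H = convSMul (𝟙 H) ((β_ H H).hom ≫ H ◁ 𝒮[H] ≫ μ[H]) := by
  rw [adjointAction, convSMul, id_tensorHom, MonoidalCategory.whiskerLeft_comp_assoc,
    MonoidalCategory.whiskerLeft_comp_assoc, MonObj.mul_assoc_flip,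
    associator_inv_naturality_right_assoc, whisker_exchange_assoc,
    MonoidalCategory.tensorHom_def_assoc]

theorem convSMulRight_braiding_antipode_mul :
    convSMulRight ((β_ H H).hom ≫ H ◁ 𝒮[H] ≫ μ[H]) (𝟙 H) = ε[H] ▷ H ≫ (λ_ H).hom := by
  have hexagon : (α_ H H H).hom ≫ H ◁ (β_ H H).hom ≫ (α_ H H H).inv ≫ (β_ H H).hom ▷ H =
      (β_ (H ⊗ H) H).hom ≫ (α_ H H H).inv := by
    simp [BraidedCategory.braiding_tensor_left_hom]
  rw [convSMulRight, tensorHom_id]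
  simp only [comp_whiskerRight, Category.assoc, MonObj.mul_assoc]
  rw [reassoc_of% hexagon, BraidedCategory.braiding_naturality_left_assoc,
    ← associator_inv_naturality_middle_assoc, Iso.inv_hom_id_assoc,
    ← MonoidalCategory.whiskerLeft_comp_assoc, ← MonoidalCategory.whiskerLeft_comp_assoc,
    Category.assoc, antipode_left, MonoidalCategory.whiskerLeft_comp_assoc, MonObj.mul_one,
    ← BraidedCategory.braiding_naturality_left_assoc, braiding_rightUnitor]
theorem convSMulRight_adjointAction : convSMulRight (adjointAction H) (𝟙 H) = μ[H] := by
  rw [adjointAction_eq_convSMul, ← convSMul_convSMulRight, convSMulRight_braiding_antipode_mul,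
    ← Category.comp_id (λ_ H).hom, convSMul_counit_whiskerRight, id_tensorHom_id, Category.id_comp]

theorem antipode_tensorHom_antipode_mul :
    (𝒮[H] ⊗ₘ 𝒮[H]) ≫ μ[H] = (β_ H H).inv ≫ μ[H] ≫ 𝒮[H] := by
  rw [mul_antipode, BraidedCategory.braiding_naturality_assoc, Iso.inv_hom_id_assoc]

theorem whiskerLeft_antipode_adjointAction :
    H ◁ 𝒮[H] ≫ adjointAction H = convSMul (𝟙 H) (μ[H] ≫ 𝒮[H]) := by
  rw [adjointAction_eq_convSMul, whiskerLeft_comp_convSMul, mul_antipode,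
    BraidedCategory.braiding_naturality_right_assoc, ← MonoidalCategory.tensorHom_def_assoc,
    ← BraidedCategory.braiding_naturality_assoc]

theorem antipode_convSMul_comp_antipode {X : C} (g : H ⊗ X ⟶ H) :
    convSMul 𝒮[H] (g ≫ 𝒮[H]) =
      Δ[H] ▷ X ≫ (α_ H H X).hom ≫ H ◁ g ≫ (β_ H H).inv ≫ μ[H] ≫ 𝒮[H] := by
  rw [convSMul, ← whiskerLeft_comp_tensorHom_assoc, antipode_tensorHom_antipode_mul]

theorem adjointAction_comp_antipode
    (hcc : Δ[H] ▷ H ≫ (α_ H H H).hom ≫ H ◁ (β_ H H).hom ≫ (α_ H H H).inv ≫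
      adjointAction H ▷ H = Δ[H] ▷ H ≫ (α_ H H H).hom ≫ H ◁ adjointAction H ≫ (β_ H H).inv) :
    adjointAction H ≫ 𝒮[H] = H ◁ 𝒮[H] ≫ adjointAction H := by
  have hμ := convSMulRight_adjointAction H
  rw [convSMulRight, tensorHom_id] at hμ
  have key : convSMul 𝒮[H] (adjointAction H ≫ 𝒮[H]) = μ[H] ≫ 𝒮[H] := by
    rw [antipode_convSMul_comp_antipode, ← reassoc_of% hcc, reassoc_of% hμ]
  rw [whiskerLeft_antipode_adjointAction, ← key, convSMul_convSMul, id_tensorHom, antipode_right,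
    counit_unit_convSMul]

end HopfObj

end CategoryTheory

@[reducible] def BraidedHopfAlgebra.toHopfObj_s14 (A : BraidedHopfAlgebra C) : HopfObj A.H where
  one := A.unit
  mul := A.mul
  counit := A.counit
  comul := A.comul
  antipode := A.antipode
  one_mul := by simpa using A.unit_left
  mul_one := by simpa using A.unit_right
  mul_assoc := by simpa using A.mul_assoc
  counit_comul := by simpa using A.counit_left
  comul_counit := by simpa using A.counit_right
  comul_assoc := by
    have h := A.comul_coassoc
    simp only [tensorHom_id, id_tensorHom] at h
    simp [reassoc_of% h]
  mul_comul := by simpa [tensorμ] using A.mul_comul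
  one_comul := by simp only [MonObj.tensorObj.one_def]; exact A.comul_unit
  mul_counit := by simpa using A.counit_mul
  one_counit := A.counit_unit
  antipode_left := by simpa using A.antipode_left
  antipode_right := by simpa using A.antipode_right

theorem adAction_antipode_general (A : BraidedHopfAlgebra C)
    (hcc : (A.comul ⊗ₘ 𝟙 A.H) ≫ (α_ A.H A.H A.H).hom ≫
      (𝟙 A.H ⊗ₘ (β_ A.H A.H).hom) ≫ (α_ A.H A.H A.H).inv ≫ (adAction A ⊗ₘ 𝟙 A.H) =
      (A.comul ⊗ₘ 𝟙 A.H) ≫ (α_ A.H A.H A.H).hom ≫ (𝟙 A.H ⊗ₘ adAction A) ≫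
        (β_ A.H A.H).inv) :
    adAction A ≫ A.antipode = (𝟙 A.H ⊗ₘ A.antipode) ≫ adAction A := by
  let := A.toHopfObj_s14
  have hAd : adAction A = HopfObj.adjointAction A.H := by
    simp only [adAction, HopfObj.adjointAction, tensorHom_id, id_tensorHom]
    rfl
  rw [hAd] at hcc ⊢
  simp only [tensorHom_id, id_tensorHom] at hcc ⊢
  exact HopfObj.adjointAction_comp_antipode A.H hcc

/-- If the left adjoint action is braided cocommutative, it intertwines the
antipode: `S ∘ ad = ad ∘ (id ⊗ S)`. -/
theorem adAction_antipode (A : BraidedHopfAlgebra C) [IsIso A.antipode]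
    (hcc : (A.comul ⊗ₘ 𝟙 A.H) ≫ (α_ A.H A.H A.H).hom ≫
      (𝟙 A.H ⊗ₘ (β_ A.H A.H).hom) ≫ (α_ A.H A.H A.H).inv ≫ (adAction A ⊗ₘ 𝟙 A.H) =
      (A.comul ⊗ₘ 𝟙 A.H) ≫ (α_ A.H A.H A.H).hom ≫ (𝟙 A.H ⊗ₘ adAction A) ≫
        (β_ A.H A.H).inv) :
    adAction A ≫ A.antipode = (𝟙 A.H ⊗ₘ A.antipode) ≫ adAction A :=
  adAction_antipode_general A hcc
end
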